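/- Let H be the N×N tridiagonal matrix with zero diagonal and off-diagonal entries J_n = (1/2)√(n(N-n)). Then exp(-iπH) e_1 = e^{iφ} e_N for some phase φ; i.e., this chain achieves perfect state transfer in time t_0 = π. -/

import Mathlib

open Matrix

/-- The spin-`(N-1)/2` `Jₓ` matrix over `ℂ`: tridiagonal, zero diagonal, off-diagonal
entries `Jₙ = (1/2)√(n(N-n))` (0-indexed coupling `(1/2)√((n+1)(N-n-1))` between sites
`n` and `n+1`). -/
noncomputable def jxMatrixC (N : ℕ) : Matrix (Fin N) (Fin N) ℂ :=
  Matrix.of fun i j =>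
    if (i : ℕ) = j then 0
    else if (i : ℕ) + 1 = j then
      ((1 / 2) * Real.sqrt (((i : ℕ) + 1) * (N - ((i : ℕ) + 1))) : ℝ)
    else if (j : ℕ) + 1 = i then
      ((1 / 2) * Real.sqrt (((j : ℕ) + 1) * (N - ((j : ℕ) + 1))) : ℝ)
    else 0

/-!
Write `N + 1` for the number of sites. The vectors `uₘ(n) = √(N choose n) Kₘ(n)`, where the
Krawtchouk number `Kₘ(n)` is the coefficient of `Xᵐ` in `(1 - X)ⁿ (1 + X)ᴺ⁻ⁿ`, are eigenvectors
of `H` with eigenvalue `N/2 - m`: after the conjugation by `√(N choose n)`, the eigenvalue equation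
is the three-term recurrence of the `Kₘ`, which comes from differentiating the generating
polynomial. The substitution `X ↦ -X` exchanges `n` and `N - n`, so `uₘ` is mirror symmetric up to
the sign `(-1)ᵐ`. Since `exp (-iπ (N/2 - m)) = e^{-iπN/2} (-1)ᵐ`, the operators `exp (-iπH)` and
`e^{-iπN/2}` times the mirror permutation agree on a basis of eigenvectors, hence everywhere, and
the mirror permutation sends `e₁` to `e_{N+1}`.
-/

section

-- `NormedSpace.exp` only depends on the topology; a norm is needed for its power series.
attribute [local instance] Matrix.linftyOpNormedRing Matrix.linftyOpNormedAlgebra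

theorem Matrix.exp_mulVec_of_mulVec_eq_smul {𝕂 m : Type*} [RCLike 𝕂] [Fintype m] [DecidableEq m]
    {A : Matrix m m 𝕂} {v : m → 𝕂} {μ : 𝕂} (h : A *ᵥ v = μ • v) :
    NormedSpace.exp A *ᵥ v = NormedSpace.exp μ • v := by
  have pow_mulVec (n : ℕ) : A ^ n *ᵥ v = μ ^ n • v := by
    induction n with
    | zero => simp
    | succ n ih => rw [pow_succ', ← mulVec_mulVec, ih, mulVec_smul, h, smul_smul, ← pow_succ]
  have hA := (NormedSpace.exp_series_hasSum_exp' (𝕂 := 𝕂) A).map (mulVec.addMonoidHomLeft v)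
    (continuous_id.matrix_mulVec continuous_const)
  have hμ := (NormedSpace.exp_series_hasSum_exp' (𝕂 := 𝕂) μ).smul_const v
  refine hA.unique ?_
  convert hμ using 2 with n
  simp [mulVec.addMonoidHomLeft, smul_mulVec, pow_mulVec, smul_smul]

end

theorem LinearMap.ext_on_hasEigenvector {K V W ι : Type*} [Field K] [AddCommGroup V] [Module K V]
    [FiniteDimensional K V] [AddCommGroup W] [Module K W] [Fintype ι]
    {A : Module.End K V} {μ : ι → K} (hμ : Function.Injective μ) {v : ι → V}
    (hv : ∀ i, A.HasEigenvector (μ i) (v i)) (hcard : Fintype.card ι = Module.finrank K V)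
    {f g : V →ₗ[K] W} (h : ∀ i, f (v i) = g (v i)) : f = g :=
  LinearMap.ext_on_range
    ((A.eigenvectors_linearIndependent' μ hμ v hv).span_eq_top_of_card_eq_finrank' hcard) h

theorem Real.sqrt_mul_mul_sqrt_eq {a b p q : ℝ} (ha : 0 ≤ a) (hb : 0 ≤ b) (h : a * q = b * p) :
    √(a * b) * √q = b * √p := by
  rw [← Real.sqrt_mul (mul_nonneg ha hb), show a * b * q = b ^ 2 * p by linear_combination b * h,
    Real.sqrt_mul (sq_nonneg b), Real.sqrt_sq hb]

theorem Nat.cast_succ_mul_choose_succ {R : Type*} [CommRing R] {N n : ℕ} (hn : n ≤ N) :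
    ((n : R) + 1) * N.choose (n + 1) = (N - n) * N.choose n := by
  have h := congrArg (Nat.cast : ℕ → R) (Nat.choose_succ_right_eq N n)
  push_cast [hn] at h
  linear_combination h

namespace Polynomial

variable {R : Type*} [CommRing R]

theorem coeff_X_mul_derivative (p : R[X]) (m : ℕ) :
    (X * derivative p).coeff m = m * p.coeff m := by
  rcases m with _ | m
  · simp
  · rw [coeff_X_mul, coeff_derivative]; push_cast; ring

theorem coeff_comp_neg_X (p : R[X]) (m : ℕ) :
    (p.comp (-X)).coeff m = (-1) ^ m * p.coeff m := by
  induction p using Polynomial.induction_on' with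
  | add p q hp hq => simp [hp, hq, mul_add]
  | monomial k c =>
    rw [← C_mul_X_pow_eq_monomial, mul_comp, C_comp, pow_comp, X_comp, neg_pow, ← mul_assoc,
      ← C_1, ← C_neg, ← C_pow, ← C_mul, coeff_C_mul_X_pow, coeff_C_mul_X_pow]
    split_ifs with h <;> simp [h, mul_comm]

end Polynomial

section Krawtchouk

open Polynomial

variable (R : Type*) [CommRing R]

noncomputable def krawtchoukGen (N n : ℕ) : R[X] := (1 - X) ^ n * (1 + X) ^ (N - n)

noncomputable def krawtchouk (N m n : ℕ) : R := (krawtchoukGen R N n).coeff m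

variable {R}

theorem krawtchoukGen_recurrence {N n : ℕ} (hn : n ≤ N) :
    (n : R[X]) * krawtchoukGen R N (n - 1) + ((N : R[X]) - n) * krawtchoukGen R N (n + 1)
      + 2 * (X : R[X]) * derivative (krawtchoukGen R N n) = N * krawtchoukGen R N n := by
  obtain ⟨k, rfl⟩ := Nat.exists_eq_add_of_le hn
  simp only [krawtchoukGen]
  rcases n with _ | n <;> rcases k with _ | k
  · simp
  on_goal 3 => rw [show n + 1 + (k + 1) - (n + 1 - 1) = k + 2 by omega,
      show n + 1 + (k + 1) - (n + 1 + 1) = k by omega,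
      show n + 1 + (k + 1) - (n + 1) = k + 1 by omega]
  all_goals
    simp only [Nat.cast_zero, Nat.cast_add, Nat.cast_one, zero_add, add_zero, zero_tsub, tsub_zero,
      add_tsub_cancel_right, add_tsub_cancel_left, tsub_self, pow_zero, derivative_mul,
      derivative_pow_succ, derivative_one, derivative_sub, derivative_X, map_add, map_natCast,
      map_one]
    ring

theorem krawtchouk_recurrence {N n : ℕ} (m : ℕ) (hn : n ≤ N) :
    n * krawtchouk R N m (n - 1) + (N - n : R) * krawtchouk R N m (n + 1)
      = (N - 2 * m : R) * krawtchouk R N m n := by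
  have h := congrArg (coeff · m) (krawtchoukGen_recurrence (R := R) hn)
  simp only [coeff_add, ← C_eq_natCast, ← C_sub, ← C_ofNat, coeff_C_mul, mul_assoc,
    coeff_X_mul_derivative] at h
  rw [krawtchouk, krawtchouk, krawtchouk]
  linear_combination h

theorem krawtchoukGen_sub {N n : ℕ} (hn : n ≤ N) :
    krawtchoukGen R N (N - n) = (krawtchoukGen R N n).comp (-X) := by
  simp [krawtchoukGen, Nat.sub_sub_self hn, sub_eq_add_neg, mul_comm]

theorem krawtchouk_sub {N n : ℕ} (m : ℕ) (hn : n ≤ N) :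
    krawtchouk R N m (N - n) = (-1) ^ m * krawtchouk R N m n := by
  rw [krawtchouk, krawtchoukGen_sub hn, coeff_comp_neg_X, krawtchouk]

theorem krawtchouk_zero (N m : ℕ) : krawtchouk R N m 0 = N.choose m := by
  rw [krawtchouk, krawtchoukGen, pow_zero, one_mul, Nat.sub_zero, add_comm, coeff_X_add_one_pow]

end Krawtchouk

noncomputable def jxCoupling (N n : ℕ) : ℝ := 1 / 2 * √(n * (N - n))

theorem jxMatrixC_apply (N : ℕ) (i j : Fin N) :
    jxMatrixC N i j = (if (i : ℕ) + 1 = j then (jxCoupling N (i + 1) : ℂ) else 0)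
      + (if (j : ℕ) + 1 = i then (jxCoupling N (j + 1) : ℂ) else 0) := by
  simp only [jxMatrixC, jxCoupling, of_apply]
  split_ifs <;> first | omega | push_cast; ring_nf

-- With real subtraction `jxCoupling N 0 = jxCoupling N N = 0`, so the boundary sites need no
-- special case, whatever `f` is at `N` and at the truncated index `0 - 1`.
theorem jxMatrixC_mulVec_apply (N : ℕ) (f : ℕ → ℂ) (i : Fin N) :
    (jxMatrixC N *ᵥ fun j => f j) i
      = jxCoupling N (i + 1) * f (i + 1) + jxCoupling N i * f (i - 1) := by
  simp only [mulVec, dotProduct, jxMatrixC_apply, add_mul, ite_mul, zero_mul,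
    Finset.sum_add_distrib]
  rw [Fin.sum_univ_eq_sum_range (fun j => if (i : ℕ) + 1 = j then _ * f j else 0),
    Fin.sum_univ_eq_sum_range
      (fun j => if j + 1 = (i : ℕ) then (jxCoupling N (j + 1) : ℂ) * f j else 0),
    Finset.sum_ite_eq]
  congr 1
  · rcases (Nat.succ_le_of_lt i.isLt).lt_or_eq with h | h
    · simp [h]
    · simp [← h, jxCoupling]
  · rcases i with ⟨_ | k, hk⟩
    · simp [jxCoupling]
    · simp [Finset.sum_ite_eq', Nat.lt_of_succ_lt hk]

theorem jxCoupling_succ_mul_sqrt_choose_succ {N n : ℕ} (hn : n ≤ N) :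
    jxCoupling (N + 1) (n + 1) * √(N.choose (n + 1)) = ((N : ℝ) - n) / 2 * √(N.choose n) := by
  have h := Real.sqrt_mul_mul_sqrt_eq (by positivity) (sub_nonneg.2 (Nat.cast_le.2 hn))
    (Nat.cast_succ_mul_choose_succ (R := ℝ) hn)
  rw [jxCoupling]; push_cast
  rw [show (N : ℝ) + 1 - (n + 1) = N - n by ring, mul_assoc, h]; ring

theorem jxCoupling_mul_sqrt_choose_pred {N n : ℕ} (hn : n ≤ N) :
    jxCoupling (N + 1) n * √(N.choose (n - 1)) = n / 2 * √(N.choose n) := by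
  rcases n with _ | n
  · simp [jxCoupling]
  have h := Real.sqrt_mul_mul_sqrt_eq (sub_nonneg.2 (Nat.cast_le.2 (Nat.le_of_succ_le hn)))
    (by positivity) (Nat.cast_succ_mul_choose_succ (R := ℝ) (Nat.le_of_succ_le hn)).symm
  rw [jxCoupling]; push_cast
  rw [show (N : ℝ) + 1 - (n + 1) = N - n by ring, mul_assoc, mul_comm ((n : ℝ) + 1), h]
  ring

noncomputable def jxEigenvector (N m n : ℕ) : ℂ := √(N.choose n) * krawtchouk ℂ N m n

theorem jxMatrixC_mulVec_jxEigenvector (N m : ℕ) :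
    jxMatrixC (N + 1) *ᵥ (fun i => jxEigenvector N m i)
      = ((N / 2 - m : ℝ) : ℂ) • fun i : Fin (N + 1) => jxEigenvector N m i := by
  ext ⟨n, hn⟩
  have hn : n ≤ N := Nat.le_of_lt_succ hn
  have up : (jxCoupling (N + 1) (n + 1) : ℂ) * √(N.choose (n + 1))
      = ((N : ℂ) - n) / 2 * √(N.choose n) := by
    simpa using congrArg Complex.ofReal (jxCoupling_succ_mul_sqrt_choose_succ hn)
  have down : (jxCoupling (N + 1) n : ℂ) * √(N.choose (n - 1)) = n / 2 * √(N.choose n) := by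
    simpa using congrArg Complex.ofReal (jxCoupling_mul_sqrt_choose_pred hn)
  rw [jxMatrixC_mulVec_apply, Pi.smul_apply, smul_eq_mul]
  simp only [jxEigenvector]
  push_cast
  linear_combination krawtchouk ℂ N m (n + 1) * up + krawtchouk ℂ N m (n - 1) * down
    + (√(N.choose n) : ℂ) / 2 * krawtchouk_recurrence (R := ℂ) m hn

theorem jxEigenvector_sub {N n : ℕ} (m : ℕ) (hn : n ≤ N) :
    jxEigenvector N m (N - n) = (-1) ^ m * jxEigenvector N m n := by
  rw [jxEigenvector, jxEigenvector, Nat.choose_symm hn, krawtchouk_sub m hn]; ring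

theorem jxEigenvector_zero (N m : ℕ) : jxEigenvector N m 0 = N.choose m := by
  simp [jxEigenvector, krawtchouk_zero]

theorem jxEigenvector_hasEigenvector (N : ℕ) (m : Fin (N + 1)) :
    Module.End.HasEigenvector (jxMatrixC (N + 1)).mulVecLin ((N / 2 - m : ℝ) : ℂ)
      (fun i : Fin (N + 1) => jxEigenvector N m i) := by
  refine ⟨Module.End.mem_eigenspace_iff.2 (jxMatrixC_mulVec_jxEigenvector N m), fun h => ?_⟩
  have h0 := congrFun h 0
  simp only [Fin.val_zero, jxEigenvector_zero, Pi.zero_apply, Nat.cast_eq_zero] at h0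
  exact (Nat.choose_pos (Nat.le_of_lt_succ m.isLt)).ne' h0

theorem exp_jxMatrixC_mulVec (N : ℕ) (v : Fin (N + 1) → ℂ) :
    NormedSpace.exp (-(Complex.I * Real.pi) • jxMatrixC (N + 1)) *ᵥ v
      = Complex.exp (-(Real.pi * N / 2) * Complex.I) • (v ∘ Fin.rev) := by
  suffices (NormedSpace.exp (-(Complex.I * Real.pi) • jxMatrixC (N + 1))).mulVecLin
      = Complex.exp (-(Real.pi * N / 2) * Complex.I) • LinearMap.funLeft ℂ ℂ Fin.rev from
    LinearMap.congr_fun this v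
  refine LinearMap.ext_on_hasEigenvector (μ := fun m : Fin (N + 1) => ((N / 2 - m : ℝ) : ℂ))
    (fun m n h => Fin.ext (by simpa using h)) (jxEigenvector_hasEigenvector N) (by simp)
    fun m => ?_
  have phase : NormedSpace.exp (-(Complex.I * Real.pi) * ((N / 2 - m : ℝ) : ℂ))
      = Complex.exp (-(Real.pi * N / 2) * Complex.I) * (-1) ^ (m : ℕ) := by
    rw [← Complex.exp_eq_exp_ℂ, ← Complex.exp_pi_mul_I, ← Complex.exp_nat_mul, ← Complex.exp_add]
    push_cast; ring_nf
  have mirror : (fun i : Fin (N + 1) => jxEigenvector N m (Fin.rev i))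
      = (-1 : ℂ) ^ (m : ℕ) • fun i : Fin (N + 1) => jxEigenvector N m i := by
    ext i
    rw [Fin.val_rev, Nat.add_sub_add_right, jxEigenvector_sub m (Nat.le_of_lt_succ i.isLt),
      Pi.smul_apply, smul_eq_mul]
  rw [mulVecLin_apply, exp_mulVec_of_mulVec_eq_smul (by
    rw [smul_mulVec, jxMatrixC_mulVec_jxEigenvector, smul_smul]), phase, LinearMap.smul_apply,
    mul_smul]
  exact congrArg _ mirror.symm

/-- The chain with couplings `Jₙ = (1/2)√(n(N-n))` achieves perfect state transfer in
time `t₀ = π`: `exp (-iπH) e₁ = e^{iφ} e_N` for some phase `φ`. -/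
theorem jx_chain_perfect_state_transfer (N : ℕ) (hN : 0 < N) :
    ∃ φ : ℝ,
      (NormedSpace.exp ((-(Complex.I * (Real.pi : ℂ))) • jxMatrixC N)).mulVec
          (Pi.single (⟨0, hN⟩ : Fin N) (1 : ℂ)) =
        Complex.exp (Complex.I * φ) •
          (Pi.single (⟨N - 1, by omega⟩ : Fin N) (1 : ℂ) : Fin N → ℂ) := by
  obtain ⟨N, rfl⟩ := Nat.exists_eq_succ_of_ne_zero hN.ne'
  refine ⟨-(Real.pi * N / 2), ?_⟩
  rw [exp_jxMatrixC_mulVec, mul_comm Complex.I]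
  push_cast
  congr 1
  exact Pi.single_comp_equiv Fin.revPerm 0 1
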